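/- Let G be a weighted graph and suppose the Max-Cut SDP for G admits an optimal solution of rank r. Then for every split graph G̃ of G, the Max-Cut SDP for G̃ admits an optimal solution of rank r. -/

import Mathlib

open Matrix Finset

/-- The Laplacian matrix of a weighted graph given by a weight function `w`. -/
noncomputable def lapW {V : Type*} [Fintype V] [DecidableEq V] (w : V → V → ℝ) :
    Matrix V V ℝ :=
  Matrix.of fun i j => if i = j then ∑ k, w i k else -w i j

/-- `w` is a valid weight function: symmetric, zero diagonal, nonnegative. -/
def IsWeight {V : Type*} [Fintype V] (w : V → V → ℝ) : Prop :=
  (∀ i j, w i j = w j i) ∧ (∀ i, w i i = 0) ∧ ∀ i j, 0 ≤ w i j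

/-- The maximum-cut value `MC(G)`. -/
noncomputable def maxCutVal {V : Type*} [Fintype V] [DecidableEq V] (w : V → V → ℝ) : ℝ :=
  sSup {c | ∃ x : V → ℝ, (∀ i, x i = 1 ∨ x i = -1) ∧
    c = (1 / 4) * (x ⬝ᵥ (lapW w).mulVec x)}

/-- The Max-Cut SDP value `φ(G)`. -/
noncomputable def sdpVal {V : Type*} [Fintype V] [DecidableEq V] (w : V → V → ℝ) : ℝ :=
  sSup {c | ∃ X : Matrix V V ℝ, X.PosSemidef ∧ (∀ i, X i i = 1) ∧
    c = (1 / 4) * (lapW w * X).trace}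

/-- `X` is an optimal solution of the Max-Cut SDP for the weighted graph `w`. -/
def IsOptSol {V : Type*} [Fintype V] [DecidableEq V] (w : V → V → ℝ)
    (X : Matrix V V ℝ) : Prop :=
  X.PosSemidef ∧ (∀ i, X i i = 1) ∧ (1 / 4) * (lapW w * X).trace = sdpVal w

/-- The Max-Cut SDP relaxation is exact: `φ(G) = MC(G)`. -/
def IsExact {V : Type*} [Fintype V] [DecidableEq V] (w : V → V → ℝ) : Prop :=
  sdpVal w = maxCutVal w

/-- The split graph of a weighted graph `w` on `Fin n`, where vertex `i` is replaced by
`p i` copies; copies of `i` and `j` (for `i ≠ j`) are joined by edges of weight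
`w i j / (p i * p j)`, and copies of the same vertex are non-adjacent. -/
noncomputable def splitW {n : ℕ} (w : Fin n → Fin n → ℝ) (p : Fin n → ℕ) :
    (Σ i : Fin n, Fin (p i)) → (Σ i : Fin n, Fin (p i)) → ℝ :=
  fun a b => if a.1 = b.1 then 0 else w a.1 b.1 / ((p a.1 : ℝ) * (p b.1 : ℝ))

/-! The objective `tr (L X)` of a unit-diagonal `X` is `∑ i j, w i j * (1 - X j i)`, so for
the split graph it only sees the block averages of `Y`. Averaging `Y` over the blocks keeps it
positive semidefinite with diagonal at most `1`, and resetting that diagonal to `1` gives a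
feasible point for `G` with the same value; conversely the block-constant lift
`X.submatrix Sigma.fst Sigma.fst` of a feasible `X` is feasible for `G̃` with the same value.
So both SDPs have the same feasible values, the lift of an optimal solution is optimal, and
lifting along the surjection `Sigma.fst` preserves rank. -/

theorem Matrix.rank_submatrix_of_surjective {R m n m₀ n₀ : Type*} [CommSemiring R]
    [StrongRankCondition R] [Fintype n] [Fintype n₀] (A : Matrix m n R) {r : m₀ → m}
    {c : n₀ → n} (hr : Function.Surjective r) (hc : Function.Surjective c) :
    (A.submatrix r c).rank = A.rank := by
  refine le_antisymm (rank_submatrix_le A r c) ?_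
  have hA : (A.submatrix r c).submatrix (Function.surjInv hr) (Function.surjInv hc) = A := by
    ext i j
    simp [Function.surjInv_eq]
  calc A.rank = _ := by rw [hA]
    _ ≤ _ := rank_submatrix_le _ _ _

theorem Matrix.PosSemidef.apply_sq_le {V : Type*} [Fintype V] {Y : Matrix V V ℝ}
    (hY : Y.PosSemidef) (a b : V) : Y a b ^ 2 ≤ Y a a * Y b b := by
  have h := (hY.submatrix ![a, b]).det_nonneg
  simp only [det_fin_two, submatrix_apply, Matrix.cons_val_zero, Matrix.cons_val_one] at h
  rw [← hY.isHermitian.apply b a, star_trivial] at h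
  linarith [sq (Y b a)]

theorem Matrix.PosSemidef.apply_le_one {V : Type*} [Fintype V] {Y : Matrix V V ℝ}
    (hY : Y.PosSemidef) (hdiag : ∀ a, Y a a = 1) (a b : V) : Y a b ≤ 1 := by
  have h := hY.apply_sq_le a b
  rw [hdiag, hdiag, one_mul, sq_le_one_iff_abs_le_one] at h
  exact (abs_le.mp h).2

section UnitDiagonal

variable {V : Type*} [DecidableEq V]

def unitDiag (Z : Matrix V V ℝ) : Matrix V V ℝ :=
  of fun i j => if i = j then 1 else Z i j

theorem unitDiag_eq_self {X : Matrix V V ℝ} (hX : ∀ i, X i i = 1) : unitDiag X = X := by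
  ext i j
  by_cases h : i = j
  · subst h; simp [unitDiag, hX]
  · simp [unitDiag, h]

theorem posSemidef_unitDiag {Z : Matrix V V ℝ} (hZ : Z.PosSemidef)
    (hle : ∀ i, Z i i ≤ 1) : (unitDiag Z).PosSemidef := by
  have h : unitDiag Z = Z + diagonal fun i => 1 - Z i i := by
    ext i j
    by_cases h : i = j
    · subst h; simp [unitDiag]
    · simp [unitDiag, h]
  rw [h]
  exact hZ.add (PosSemidef.diagonal fun i => sub_nonneg.mpr (hle i))

theorem trace_lapW_mul [Fintype V] {w : V → V → ℝ} (hw : ∀ i, w i i = 0)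
    {X : Matrix V V ℝ} (hX : ∀ i, X i i = 1) :
    (lapW w * X).trace = ∑ i, ∑ j, w i j * (1 - X j i) := by
  simp only [trace, diag_apply, mul_apply, lapW, of_apply]
  refine sum_congr rfl fun i _ => ?_
  have hterm : ∀ j, (if i = j then ∑ k, w i k else -w i j) * X j i
      = (if i = j then ∑ k, w i k else 0) - w i j * X j i := by
    intro j
    by_cases h : i = j
    · subst h; simp [hw, hX]
    · simp [h]
  simp [hterm, mul_sub, sum_sub_distrib]

theorem trace_lapW_mul_unitDiag [Fintype V] {w : V → V → ℝ} (hw : ∀ i, w i i = 0)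
    (Z : Matrix V V ℝ) :
    (lapW w * unitDiag Z).trace = ∑ i, ∑ j, w i j * (1 - Z j i) := by
  rw [trace_lapW_mul hw fun i => if_pos rfl]
  refine sum_congr rfl fun i _ => sum_congr rfl fun j _ => ?_
  by_cases h : j = i
  · subst h; simp [hw]
  · simp [unitDiag, h]

end UnitDiagonal

noncomputable section BlockAvg

variable {ι : Type*} [Fintype ι] [DecidableEq ι] (p : ι → ℕ)

def avgMat : Matrix (Σ i, Fin (p i)) ι ℝ :=
  of fun a j => if a.1 = j then (p j : ℝ)⁻¹ else 0

def blockAvg (Y : Matrix (Σ i, Fin (p i)) (Σ i, Fin (p i)) ℝ) : Matrix ι ι ℝ :=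
  (avgMat p)ᴴ * Y * avgMat p

theorem sum_avgMat_mul (j : ι) (f : (Σ i, Fin (p i)) → ℝ) :
    ∑ a, avgMat p a j * f a = (p j : ℝ)⁻¹ * ∑ x, f ⟨j, x⟩ := by
  rw [Fintype.sum_sigma, Fintype.sum_eq_single j fun k hk => by simp [avgMat, hk], mul_sum]
  simp [avgMat]

theorem blockAvg_apply (Y : Matrix (Σ i, Fin (p i)) (Σ i, Fin (p i)) ℝ) (i j : ι) :
    blockAvg p Y i j = (p i : ℝ)⁻¹ * (p j : ℝ)⁻¹ * ∑ x, ∑ y, Y ⟨i, x⟩ ⟨j, y⟩ := by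
  simp only [blockAvg, mul_apply, conjTranspose_apply, star_trivial]
  simp_rw [sum_avgMat_mul, mul_comm _ (avgMat p _ j), sum_avgMat_mul, ← mul_sum]
  rw [sum_comm]
  ring

variable {p}

theorem Matrix.PosSemidef.blockAvg {Y : Matrix (Σ i, Fin (p i)) (Σ i, Fin (p i)) ℝ}
    (hY : Y.PosSemidef) : (blockAvg p Y).PosSemidef :=
  hY.conjTranspose_mul_mul_same _

theorem blockAvg_apply_self_le_one {Y : Matrix (Σ i, Fin (p i)) (Σ i, Fin (p i)) ℝ}
    (hY : Y.PosSemidef) (hdiag : ∀ a, Y a a = 1) (i : ι) : blockAvg p Y i i ≤ 1 :=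
  calc blockAvg p Y i i = (p i : ℝ)⁻¹ * (p i : ℝ)⁻¹ * ∑ x, ∑ y, Y ⟨i, x⟩ ⟨i, y⟩ :=
        blockAvg_apply p Y i i
    _ ≤ (p i : ℝ)⁻¹ * (p i : ℝ)⁻¹ * ∑ _x : Fin (p i), ∑ _y : Fin (p i), 1 := by
        gcongr; exact hY.apply_le_one hdiag _ _
    _ = ((p i : ℝ) * p i)⁻¹ * ((p i : ℝ) * p i) := by simp
    _ ≤ 1 := inv_mul_le_one_of_le₀ le_rfl (by positivity)

theorem blockAvg_submatrix_fst (hp : ∀ i, 0 < p i) (X : Matrix ι ι ℝ) :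
    blockAvg p (X.submatrix Sigma.fst Sigma.fst) = X := by
  ext i j
  have hi : (p i : ℝ) ≠ 0 := by exact_mod_cast (hp i).ne'
  have hj : (p j : ℝ) ≠ 0 := by exact_mod_cast (hp j).ne'
  simp only [blockAvg_apply, submatrix_apply, sum_const, card_univ, Fintype.card_fin, nsmul_eq_mul]
  field_simp

end BlockAvg

section SplitGraph

variable {n : ℕ} {w : Fin n → Fin n → ℝ} {p : Fin n → ℕ}

theorem trace_lapW_splitW_mul (hw : ∀ i, w i i = 0) (hp : ∀ i, 0 < p i)
    {Y : Matrix (Σ i, Fin (p i)) (Σ i, Fin (p i)) ℝ}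
    (hY : ∀ a, Y a a = 1) :
    (lapW (splitW w p) * Y).trace = (lapW w * unitDiag (blockAvg p Y)).trace := by
  rw [trace_lapW_mul (w := splitW w p) (fun a => if_pos rfl) hY, trace_lapW_mul_unitDiag hw,
    Fintype.sum_sigma]
  refine sum_congr rfl fun i _ => ?_
  rw [sum_comm, Fintype.sum_sigma]
  refine sum_congr rfl fun j _ => ?_
  rw [blockAvg_apply]
  by_cases hij : i = j
  · subst hij; simp [splitW, hw]
  · have hi : (p i : ℝ) ≠ 0 := by exact_mod_cast (hp i).ne'
    have hj : (p j : ℝ) ≠ 0 := by exact_mod_cast (hp j).ne'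
    simp only [splitW, if_neg hij, ← mul_sum, sum_sub_distrib, sum_const, card_univ,
      Fintype.card_fin, nsmul_eq_mul, mul_one]
    field_simp

theorem trace_lapW_splitW_submatrix_fst (hw : ∀ i, w i i = 0) (hp : ∀ i, 0 < p i)
    {X : Matrix (Fin n) (Fin n) ℝ} (hX : ∀ i, X i i = 1) :
    (lapW (splitW w p) * X.submatrix Sigma.fst Sigma.fst).trace = (lapW w * X).trace := by
  rw [trace_lapW_splitW_mul hw hp fun a => hX a.1, blockAvg_submatrix_fst hp,
    unitDiag_eq_self hX]

theorem sdpVal_splitW (hw : ∀ i, w i i = 0) (hp : ∀ i, 0 < p i) :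
    sdpVal (splitW w p) = sdpVal w := by
  unfold sdpVal
  congr 1
  ext c
  constructor
  · rintro ⟨Y, hY, hYdiag, rfl⟩
    exact ⟨unitDiag (blockAvg p Y),
      posSemidef_unitDiag hY.blockAvg (blockAvg_apply_self_le_one hY hYdiag),
      fun i => if_pos rfl, by rw [trace_lapW_splitW_mul hw hp hYdiag]⟩
  · rintro ⟨X, hX, hXdiag, rfl⟩
    exact ⟨X.submatrix Sigma.fst Sigma.fst, hX.submatrix _, fun a => hXdiag a.1,
      by rw [trace_lapW_splitW_submatrix_fst hw hp hXdiag]⟩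

end SplitGraph

/-- **Splitting preserves the rank of optimal SDP solutions.**
If the Max-Cut SDP for a weighted graph `G` admits an optimal solution of rank `r`, then
for every split graph `G̃` of `G` the Max-Cut SDP for `G̃` admits an optimal solution of
rank `r`. -/
theorem splitW_exists_optSol_rank {n : ℕ} (w : Fin n → Fin n → ℝ) (hw : IsWeight w)
    (p : Fin n → ℕ) (hp : ∀ i, 0 < p i) (r : ℕ)
    (h : ∃ X : Matrix (Fin n) (Fin n) ℝ, IsOptSol w X ∧ X.rank = r) :
    ∃ Y : Matrix (Σ i : Fin n, Fin (p i)) (Σ i : Fin n, Fin (p i)) ℝ,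
      IsOptSol (splitW w p) Y ∧ Y.rank = r := by
  obtain ⟨X, ⟨hX, hXdiag, hXopt⟩, rfl⟩ := h
  have hfst : Function.Surjective (Sigma.fst : (Σ i, Fin (p i)) → Fin n) :=
    fun i => ⟨⟨i, 0, hp i⟩, rfl⟩
  refine ⟨X.submatrix Sigma.fst Sigma.fst, ⟨hX.submatrix _, fun a => hXdiag a.1, ?_⟩,
    X.rank_submatrix_of_surjective hfst hfst⟩
  rw [sdpVal_splitW hw.2.1 hp, trace_lapW_splitW_submatrix_fst hw.2.1 hp hXdiag, hXopt]
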